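/- arXiv:2111.00749 — 6 statements merged into one kernel-verified Lean document; each statement's English description precedes it below -/
import Mathlib

section
/- Let p, q, r ≥ 2 be integers with 1/p + 1/q + 1/r ≤ 1, let M = max{p,q,r}, let a be a real number with a > 12M, and let t be a complex number with 0 < |t| < 1. Then for every (x,y,z) ∈ ℂ³ satisfying x^p + y^q + z^r + a·x·y·z = t and |x|² + |y|² + |z|² = 1, the two vectors ∇f(x,y,z) = (p·x^{p-1} + a·y·z, q·y^{q-1} + a·z·x, r·z^{r-1} + a·x·y) and (conj x, conj y, conj z) in ℂ³ are linearly independent over ℂ. (In particular, the unit sphere S⁵ is transverse to the level set f⁻¹(t), so V_a(1,t) = f⁻¹(t) ∩ D⁶ is a Milnor fiber.) -/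
/-!
Suppose `α ≠ 0` and put `λ = β / α`, `u = ‖x‖²`, `v = ‖y‖²`, `w = ‖z‖²`, `P = a x y z`.
If a coordinate vanishes, its gradient equation forces a second one to vanish, and then `‖t‖ = 1`.
Otherwise, multiplying the gradient equations by `x`, `y`, `z` gives the Euler relations
`p x^p + P + λ u = 0`, etc. As `‖x^p‖ ≤ u`, they give `‖P‖ ≤ (‖λ‖ + M) u` (likewise for `v`, `w`)
and `‖λ‖ ≤ 3 ‖P‖ + M`, and with `‖P‖² = a² u v w` this yields `a² ≤ 3 (‖λ‖ + M)²`.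
On the other hand, solving the Euler relations for `x^p`, `y^q`, `z^r` and substituting into
`f = t` gives `(κ + 3σ) P = t - σ (p x^p + q y^q + r z^r)` with `κ = 1 - 1/p - 1/q - 1/r ≥ 0` and
`σ = u/p + v/q + w/r ≥ 1/M`, whence `3 ‖P‖ < 2M`. So `a² < 48 M²`, contradicting `a > 12 M`.
-/

open Finset

lemma card_mul_norm_lt {ι : Type*} [Fintype ι] {n u : ι → ℝ} {s : ι → ℂ} {M : ℝ} {P l t : ℂ}
    (hn : ∀ i, 0 < n i) (hnM : ∀ i, n i ≤ M) (hn_inv : ∑ i, 1 / n i ≤ 1)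
    (hu : ∀ i, 0 ≤ u i) (hu_sum : ∑ i, u i = 1) (hs : ∀ i, ‖s i‖ ≤ u i)
    (he : ∀ i, n i * s i + P + l * u i = 0) (ht : ∑ i, s i + P = t) (ht1 : ‖t‖ < 1) :
    Fintype.card ι * ‖P‖ < 2 * M := by
  set σ := ∑ i, u i / n i
  set κ := 1 - ∑ i, 1 / n i
  set G := ∑ i, n i * s i
  have hs_eq : ∀ i, s i = -(P + l * u i) / n i := fun i => by
    have : (n i : ℂ) ≠ 0 := Complex.ofReal_ne_zero.2 (hn i).ne'
    field_simp
    linear_combination he i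
  have hG : G = -(Fintype.card ι * P + l) := by
    have := Finset.sum_eq_zero (s := univ) (fun i _ => he i)
    simp only [sum_add_distrib, sum_const, card_univ, ← mul_sum, ← Complex.ofReal_sum, hu_sum,
      nsmul_eq_mul, Complex.ofReal_one, mul_one] at this
    linear_combination this
  have key : ((κ + Fintype.card ι * σ : ℝ) : ℂ) * P = t - σ * G := by
    rw [← ht, hG]
    simp only [hs_eq, κ, σ]
    push_cast
    simp only [neg_div, add_div, sum_neg_distrib, sum_add_distrib, mul_div_assoc,
      ← mul_one_div P, ← mul_sum]
    ring
  have hG_le : ‖G‖ ≤ M := calc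
    ‖G‖ ≤ ∑ i, n i * ‖s i‖ := by
      refine (norm_sum_le _ _).trans_eq (sum_congr rfl fun i _ => ?_)
      rw [norm_mul, Complex.norm_real, Real.norm_of_nonneg (hn i).le]
    _ ≤ ∑ i, M * u i := sum_le_sum fun i _ =>
      mul_le_mul (hnM i) (hs i) (norm_nonneg _) ((hn i).le.trans (hnM i))
    _ = M := by rw [← mul_sum, hu_sum, mul_one]
  have hσM : 1 ≤ M * σ := calc
    1 = ∑ i, u i := hu_sum.symm
    _ ≤ ∑ i, M * (u i / n i) := sum_le_sum fun i _ => by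
      rw [mul_div_assoc', le_div_iff₀ (hn i)]
      exact mul_le_mul_of_nonneg_left (hnM i) (hu i) |>.trans_eq (mul_comm _ _)
    _ = M * σ := (mul_sum _ _ _).symm
  have hσ : 0 ≤ σ := sum_nonneg fun i _ => div_nonneg (hu i) (hn i).le
  have hσ0 : 0 < σ := lt_of_le_of_ne hσ fun h => by
    rw [← h, mul_zero] at hσM
    linarith
  have hκ : 0 ≤ κ := sub_nonneg.2 hn_inv
  have hnorm : (κ + Fintype.card ι * σ) * ‖P‖ ≤ ‖t‖ + σ * M := by
    have := congrArg norm key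
    rw [norm_mul, Complex.norm_real, Real.norm_of_nonneg (by positivity)] at this
    rw [this]
    refine (norm_sub_le _ _).trans (add_le_add_right ?_ _)
    rw [norm_mul, Complex.norm_real, Real.norm_of_nonneg hσ]
    exact mul_le_mul_of_nonneg_left hG_le hσ
  nlinarith [norm_nonneg P]

lemma norm_le_of_add_add_eq_zero {w P l : ℂ} {u M : ℝ} (hu : 0 ≤ u) (hw : ‖w‖ ≤ M * u)
    (h : w + P + l * u = 0) : ‖P‖ ≤ (‖l‖ + M) * u ∧ ‖l‖ * u ≤ ‖P‖ + M * u := by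
  have hlu : ‖l * u‖ = ‖l‖ * u := by rw [norm_mul, Complex.norm_real, Real.norm_of_nonneg hu]
  constructor
  · calc ‖P‖ = ‖-(w + l * u)‖ := congrArg norm (by linear_combination h)
      _ ≤ ‖w‖ + ‖l * u‖ := (norm_neg _).trans_le (norm_add_le _ _)
      _ ≤ (‖l‖ + M) * u := by linarith
  · calc ‖l‖ * u = ‖-(w + P)‖ := hlu.symm.trans (congrArg norm (by linear_combination h))
      _ ≤ ‖w‖ + ‖P‖ := (norm_neg _).trans_le (norm_add_le _ _)
      _ ≤ ‖P‖ + M * u := by linarith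

lemma sq_le_three_mul_sq {A K P u v w : ℝ} (hu : 0 < u) (hv : 0 < v) (hw : 0 < w)
    (hsum : u + v + w = 1) (hP : 0 ≤ P) (hPu : P ≤ K * u) (hPv : P ≤ K * v) (hPw : P ≤ K * w)
    (hP2 : P ^ 2 = A ^ 2 * (u * v * w)) : A ^ 2 ≤ 3 * K ^ 2 := by
  have pair : ∀ {u v w : ℝ}, 0 < v → 0 < w → P ≤ K * v → P ≤ K * w →
      P ^ 2 = A ^ 2 * (u * v * w) → A ^ 2 * u ≤ K ^ 2 := by
    intro u v w hv hw hPv hPw hP2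
    refine le_of_mul_le_mul_right ?_ (mul_pos hv hw)
    calc A ^ 2 * u * (v * w) = P * P := by rw [← sq, hP2]; ring
      _ ≤ K * v * (K * w) := mul_le_mul hPv hPw hP (hP.trans hPv)
      _ = K ^ 2 * (v * w) := by ring
  have hu' := pair hv hw hPv hPw hP2
  have hv' := pair (u := v) hw hu hPw hPu (by rw [hP2]; ring)
  have hw' := pair (u := w) hu hv hPu hPv (by rw [hP2]; ring)
  linear_combination hu' + hv' + hw' - A ^ 2 * hsum

lemma norm_pow_le_sq_norm {x : ℂ} {n : ℕ} (hn : 2 ≤ n) (hx : ‖x‖ ^ 2 ≤ 1) :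
    ‖x ^ n‖ ≤ ‖x‖ ^ 2 := by
  rw [norm_pow]
  exact pow_le_pow_of_le_one (norm_nonneg x) (pow_le_one_iff_of_nonneg (norm_nonneg x)
    two_ne_zero |>.1 hx) hn

lemma euler_add_eq_zero {n : ℕ} (hn : n ≠ 0) {x b α β : ℂ} (hα : α ≠ 0)
    (h : α * (n * x ^ (n - 1) + b) + β * starRingEnd ℂ x = 0) :
    n * x ^ n + x * b + β / α * ((‖x‖ ^ 2 : ℝ) : ℂ) = 0 := by
  have hx : x ^ (n - 1) * x = x ^ n := by
    rw [← pow_succ, Nat.sub_add_cancel (Nat.one_le_iff_ne_zero.2 hn)]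
  field_simp
  push_cast
  linear_combination x * h - α * n * hx - β * Complex.mul_conj' x

lemma ne_zero_of_gradient_eq {p q r : ℕ} (hp : 2 ≤ p) (hq : q ≠ 0) (hr : r ≠ 0) {a : ℂ}
    (ha : a ≠ 0) {t x y z α β : ℂ} (ht1 : ‖t‖ < 1)
    (hf : x ^ p + y ^ q + z ^ r + a * x * y * z = t) (hs : ‖x‖ ^ 2 + ‖y‖ ^ 2 + ‖z‖ ^ 2 = 1)
    (hα : α ≠ 0) (h : α * (p * x ^ (p - 1) + a * y * z) + β * starRingEnd ℂ x = 0) :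
    x ≠ 0 := by
  rintro rfl
  have lone : ∀ {w : ℂ} {n : ℕ}, ‖w‖ ^ 2 = 1 → w ^ n = t → False := fun hw hwt => by
    rw [pow_eq_one_iff_of_nonneg (norm_nonneg _) two_ne_zero] at hw
    rw [← hwt, norm_pow, hw, one_pow] at ht1
    exact lt_irrefl _ ht1
  obtain rfl | rfl : y = 0 ∨ z = 0 := by
    simpa [zero_pow (by omega : p - 1 ≠ 0), hα, ha] using h
  · exact lone (w := z) (by simpa using hs) (by simpa [zero_pow (by omega : p ≠ 0), hq] using hf)
  · exact lone (w := y) (by simpa using hs) (by simpa [zero_pow (by omega : p ≠ 0), hr] using hf)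

lemma false_of_euler_relations {p q r : ℕ} (hp : 2 ≤ p) (hq : 2 ≤ q) (hr : 2 ≤ r)
    (hpqr : (1 : ℝ) / p + 1 / q + 1 / r ≤ 1) {M a : ℝ} (hpM : (p : ℝ) ≤ M) (hqM : (q : ℝ) ≤ M)
    (hrM : (r : ℝ) ≤ M) (ha : 12 * M < a) {t x y z l : ℂ} (ht1 : ‖t‖ < 1)
    (hx : x ≠ 0) (hy : y ≠ 0) (hz : z ≠ 0)
    (hf : x ^ p + y ^ q + z ^ r + a * x * y * z = t) (hs : ‖x‖ ^ 2 + ‖y‖ ^ 2 + ‖z‖ ^ 2 = 1)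
    (e1 : p * x ^ p + a * x * y * z + l * ((‖x‖ ^ 2 : ℝ) : ℂ) = 0)
    (e2 : q * y ^ q + a * x * y * z + l * ((‖y‖ ^ 2 : ℝ) : ℂ) = 0)
    (e3 : r * z ^ r + a * x * y * z + l * ((‖z‖ ^ 2 : ℝ) : ℂ) = 0) : False := by
  set P : ℂ := a * x * y * z
  have bx : ‖x ^ p‖ ≤ ‖x‖ ^ 2 :=
    norm_pow_le_sq_norm hp (by linarith [sq_nonneg ‖y‖, sq_nonneg ‖z‖])
  have by' : ‖y ^ q‖ ≤ ‖y‖ ^ 2 :=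
    norm_pow_le_sq_norm hq (by linarith [sq_nonneg ‖x‖, sq_nonneg ‖z‖])
  have bz : ‖z ^ r‖ ≤ ‖z‖ ^ 2 :=
    norm_pow_le_sq_norm hr (by linarith [sq_nonneg ‖x‖, sq_nonneg ‖y‖])
  have hupper : 3 * ‖P‖ < 2 * M := by
    have := card_mul_norm_lt (n := ![(p : ℝ), q, r]) (u := ![‖x‖ ^ 2, ‖y‖ ^ 2, ‖z‖ ^ 2])
      (s := ![x ^ p, y ^ q, z ^ r]) (M := M) (P := P) (l := l)
      (fun i => by fin_cases i <;> simp <;> omega)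
      (fun i => by fin_cases i <;> assumption)
      (by simpa [Fin.sum_univ_three] using hpqr)
      (fun i => by fin_cases i <;> exact sq_nonneg _)
      (by simpa [Fin.sum_univ_three] using hs)
      (fun i => by fin_cases i <;> assumption)
      (fun i => by fin_cases i; exacts [by simpa using e1, by simpa using e2, by simpa using e3])
      (by simpa [Fin.sum_univ_three] using hf) ht1
    simpa using this
  have hM : 0 ≤ M := (Nat.cast_nonneg p).trans hpM
  have hw : ∀ {w : ℂ} {n : ℕ}, (n : ℝ) ≤ M → ‖w ^ n‖ ≤ ‖w‖ ^ 2 → ‖(n : ℂ) * w ^ n‖ ≤ M * ‖w‖ ^ 2 :=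
    fun hnM hb => by
      rw [norm_mul, Complex.norm_natCast]
      exact mul_le_mul hnM hb (norm_nonneg _) hM
  obtain ⟨cx, cx'⟩ := norm_le_of_add_add_eq_zero (sq_nonneg _) (hw hpM bx) e1
  obtain ⟨cy, cy'⟩ := norm_le_of_add_add_eq_zero (sq_nonneg _) (hw hqM by') e2
  obtain ⟨cz, cz'⟩ := norm_le_of_add_add_eq_zero (sq_nonneg _) (hw hrM bz) e3
  have hl : ‖l‖ ≤ 3 * ‖P‖ + M := by
    linear_combination cx' + cy' + cz' + (M - ‖l‖) * hs
  have hP2 : ‖P‖ ^ 2 = a ^ 2 * (‖x‖ ^ 2 * ‖y‖ ^ 2 * ‖z‖ ^ 2) := by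
    simp only [P, norm_mul, Complex.norm_real, Real.norm_eq_abs, mul_pow, sq_abs]
    ring
  have hlower := sq_le_three_mul_sq (by positivity) (by positivity) (by positivity) hs
    (norm_nonneg P) cx cy cz hP2
  have hK : ‖l‖ + M < 4 * M := by linarith
  nlinarith [norm_nonneg l]

theorem stmt_0_general (p q r : ℕ) (hp : 2 ≤ p) (hq : 2 ≤ q) (hr : 2 ≤ r)
    (hpqr : (1 : ℝ) / p + 1 / q + 1 / r ≤ 1)
    (a : ℝ) (ha : 12 * ((max p (max q r) : ℕ) : ℝ) < a)
    (t : ℂ) (ht1 : ‖t‖ < 1)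
    (x y z : ℂ)
    (hf : x ^ p + y ^ q + z ^ r + (a : ℂ) * x * y * z = t)
    (hs : ‖x‖ ^ 2 + ‖y‖ ^ 2 + ‖z‖ ^ 2 = 1)
    (α β : ℂ)
    (h1 : α * ((p : ℂ) * x ^ (p - 1) + (a : ℂ) * y * z) + β * (starRingEnd ℂ) x = 0)
    (h2 : α * ((q : ℂ) * y ^ (q - 1) + (a : ℂ) * z * x) + β * (starRingEnd ℂ) y = 0)
    (h3 : α * ((r : ℂ) * z ^ (r - 1) + (a : ℂ) * x * y) + β * (starRingEnd ℂ) z = 0) :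
    α = 0 ∧ β = 0 := by
  have haC : (a : ℂ) ≠ 0 := Complex.ofReal_ne_zero.2 ((lt_of_le_of_lt (by positivity) ha).ne')
  have hα : α = 0 := by
    by_contra hα
    have hx := ne_zero_of_gradient_eq hp (by omega) (by omega) haC ht1 hf hs hα h1
    have hy := ne_zero_of_gradient_eq (q := r) (r := p) hq (by omega) (by omega) haC ht1
      (by linear_combination hf) (by linarith) hα h2
    have hz := ne_zero_of_gradient_eq (q := p) (r := q) hr (by omega) (by omega) haC ht1
      (by linear_combination hf) (by linarith) hα h3
    exact false_of_euler_relations (l := β / α) hp hq hr hpqr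
      (by exact_mod_cast le_max_left p (max q r))
      (by exact_mod_cast (le_max_left q r).trans (le_max_right p _))
      (by exact_mod_cast (le_max_right q r).trans (le_max_right p _)) ha ht1 hx hy hz hf hs
      (by linear_combination euler_add_eq_zero (by omega) hα h1)
      (by linear_combination euler_add_eq_zero (by omega) hα h2)
      (by linear_combination euler_add_eq_zero (by omega) hα h3)
  subst hα
  refine ⟨rfl, by_contra fun hβ => ?_⟩
  simp only [zero_mul, zero_add, mul_eq_zero, hβ, false_or, map_eq_zero] at h1 h2 h3
  simp [h1, h2, h3] at hs

/-- Let `p q r ≥ 2` with `1/p + 1/q + 1/r ≤ 1`, `M = max {p,q,r}`,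
`a > 12M` real, and `t` complex with `0 < |t| < 1`. For every `(x,y,z) ∈ ℂ³` with
`x^p + y^q + z^r + a·x·y·z = t` and `|x|² + |y|² + |z|² = 1`, the gradient vector
`∇f(x,y,z)` and `(conj x, conj y, conj z)` are linearly independent over `ℂ`. -/
theorem stmt_0 (p q r : ℕ) (hp : 2 ≤ p) (hq : 2 ≤ q) (hr : 2 ≤ r)
    (hpqr : (1 : ℝ) / p + 1 / q + 1 / r ≤ 1)
    (a : ℝ) (ha : 12 * ((max p (max q r) : ℕ) : ℝ) < a)
    (t : ℂ) (ht0 : 0 < ‖t‖) (ht1 : ‖t‖ < 1)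
    (x y z : ℂ)
    (hf : x ^ p + y ^ q + z ^ r + (a : ℂ) * x * y * z = t)
    (hs : ‖x‖ ^ 2 + ‖y‖ ^ 2 + ‖z‖ ^ 2 = 1)
    (α β : ℂ)
    (h1 : α * ((p : ℂ) * x ^ (p - 1) + (a : ℂ) * y * z) + β * (starRingEnd ℂ) x = 0)
    (h2 : α * ((q : ℂ) * y ^ (q - 1) + (a : ℂ) * z * x) + β * (starRingEnd ℂ) y = 0)
    (h3 : α * ((r : ℂ) * z ^ (r - 1) + (a : ℂ) * x * y) + β * (starRingEnd ℂ) z = 0) :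
    α = 0 ∧ β = 0 :=
  stmt_0_general p q r hp hq hr hpqr a ha t ht1 x y z hf hs α β h1 h2 h3
end

section
/- Let φ : ℝ → ℝ be a continuously differentiable function with 0 ≤ φ(s) ≤ 1 and −4 ≤ φ'(s) ≤ 0 for all s, with φ(s) = 1 for s ≤ 1/6 and φ(s) = 0 for s ≥ 1/2. Define φ₁ on the open set {(x,y,z) ∈ ℂ³ : x ≠ 0} by φ₁(x,y,z) = φ(√(|y|² + |z|²)/|x|). Then φ₁ is differentiable at every point with x ≠ 0, and the operator norm of its real Fréchet derivative at such a point is strictly less than 6/|x|; equivalently, its holomorphic gradient ∇φ₁ = (∂φ₁/∂x, ∂φ₁/∂y, ∂φ₁/∂z) and its antiholomorphic gradient both have Euclidean norm strictly less than 3/|x|. -/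
/-!
Write `φ₁ = φ ∘ (r / a)` with `a = ‖x‖` and `r = √(|y|² + |z|²)`. Both are norms of real-linear
maps of operator norm at most one, hence 1-Lipschitz, so the quotient rule gives
`‖d(r / a)‖ ≤ (1 + r / a) / a`. Where `r / a < 1/2` the bound `|φ'| ≤ 4` yields strictly less
than `4 · (3/2) / a = 6 / a`; where `r / a ≥ 1/2`, `φ` attains its minimum `0`, so `φ' = 0`.
At `r = 0`, where `r` is not differentiable, `φ₁ ≡ 1` near the point because `φ ≡ 1` on `s ≤ 1/6`.
-/

/-- The cut-off function `φ₁(x,y,z) = φ(√(|y|²+|z|²)/|x|)` on `ℂ³` (with the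
Euclidean metric), viewed as a map on `EuclideanSpace ℂ (Fin 3)`. -/
noncomputable def phiOne (φ : ℝ → ℝ) (w : EuclideanSpace ℂ (Fin 3)) : ℝ :=
  φ (Real.sqrt (‖w 1‖ ^ 2 + ‖w 2‖ ^ 2) / ‖w 0‖)

open Filter Topology

section Quotient

variable {E F : Type*} [NormedAddCommGroup E] [NormedSpace ℝ E]
  [NormedAddCommGroup F] [NormedSpace ℝ F]

theorem norm_fderiv_norm_comp_le_one (L : E →L[ℝ] F) (hL : ∀ w, ‖L w‖ ≤ ‖w‖) (p : E) :
    ‖fderiv ℝ (fun w => ‖L w‖) p‖ ≤ 1 := by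
  refine norm_fderiv_le_of_lip' ℝ zero_le_one (Eventually.of_forall fun w => ?_)
  calc ‖‖L w‖ - ‖L p‖‖ ≤ ‖L w - L p‖ := abs_norm_sub_norm_le _ _
    _ = ‖L (w - p)‖ := by rw [map_sub]
    _ ≤ 1 * ‖w - p‖ := (hL _).trans_eq (one_mul _).symm

theorem HasFDerivAt.fun_div_real {r a : E → ℝ} {R A : E →L[ℝ] ℝ} {p : E}
    (hr : HasFDerivAt r R p) (ha : HasFDerivAt a A p) (hp : a p ≠ 0) :
    HasFDerivAt (fun w => r w / a w) ((a p)⁻¹ • R - (r p / a p ^ 2) • A) p := by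
  have hinv : HasFDerivAt (fun w => (a w)⁻¹) (-(a p ^ 2)⁻¹ • A) p :=
    (hasDerivAt_inv hp).comp_hasFDerivAt p ha
  refine (hr.mul hinv).congr_fderiv ?_
  ext v
  simp only [add_apply, sub_apply, smul_apply, smul_eq_mul]
  field_simp
  ring

theorem norm_fderiv_comp_div_le {φ : ℝ → ℝ} {r a : E → ℝ} {p : E}
    (hφ : DifferentiableAt ℝ φ (r p / a p)) (hr : DifferentiableAt ℝ r p)
    (ha : DifferentiableAt ℝ a p) (hpos : 0 < a p) (hr0 : 0 ≤ r p)
    (hR : ‖fderiv ℝ r p‖ ≤ 1) (hA : ‖fderiv ℝ a p‖ ≤ 1) :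
    ‖fderiv ℝ (fun w => φ (r w / a w)) p‖ ≤ |deriv φ (r p / a p)| * (1 + r p / a p) / a p := by
  have hdiv := hr.hasFDerivAt.fun_div_real ha.hasFDerivAt hpos.ne'
  have hcomp : HasFDerivAt (fun w => φ (r w / a w)) _ p := hφ.hasDerivAt.comp_hasFDerivAt p hdiv
  rw [hcomp.fderiv, norm_smul, Real.norm_eq_abs, mul_div_assoc]
  gcongr
  calc ‖(a p)⁻¹ • fderiv ℝ r p - (r p / a p ^ 2) • fderiv ℝ a p‖
      ≤ ‖(a p)⁻¹ • fderiv ℝ r p‖ + ‖(r p / a p ^ 2) • fderiv ℝ a p‖ := norm_sub_le _ _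
    _ = (a p)⁻¹ * ‖fderiv ℝ r p‖ + r p / a p ^ 2 * ‖fderiv ℝ a p‖ := by
      rw [norm_smul, norm_smul, Real.norm_of_nonneg (by positivity),
        Real.norm_of_nonneg (by positivity)]
    _ ≤ (a p)⁻¹ * 1 + r p / a p ^ 2 * 1 := by gcongr
    _ = (1 + r p / a p) / a p := by field_simp

end Quotient

theorem comp_div_eventuallyEq_of_eq_zero {E : Type*} [TopologicalSpace E] {φ : ℝ → ℝ}
    {r a : E → ℝ} {p : E} {b c : ℝ}
    (hφ : ∀ s ≤ c, φ s = b) (hc : 0 < c) (hr : ContinuousAt r p) (ha : ContinuousAt a p)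
    (hp : a p ≠ 0) (hr0 : r p = 0) :
    (fun w => φ (r w / a w)) =ᶠ[𝓝 p] fun _ => b := by
  have hlt : ∀ᶠ w in 𝓝 p, r w / a w < c :=
    (hr.div ha hp).eventually_lt continuousAt_const (by simpa [hr0] using hc)
  filter_upwards [hlt] with w hw using hφ _ hw.le

theorem abs_deriv_mul_one_add_lt {φ : ℝ → ℝ} (hφ0 : ∀ s, 0 ≤ φ s)
    (hφ'lo : ∀ s, -4 ≤ deriv φ s) (hφ'hi : ∀ s, deriv φ s ≤ 0)
    (hφhigh : ∀ s : ℝ, 1 / 2 ≤ s → φ s = 0) {t : ℝ} (ht0 : 0 ≤ t) :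
    |deriv φ t| * (1 + t) < 6 := by
  rcases lt_or_ge t (1 / 2) with ht | ht
  · rw [abs_of_nonpos (hφ'hi t)]
    nlinarith [hφ'lo t]
  · have hmin : IsLocalMin φ t := Eventually.of_forall fun s => (hφhigh t ht).trans_le (hφ0 s)
    rw [hmin.deriv_eq_zero]
    norm_num

noncomputable def firstCoord : EuclideanSpace ℂ (Fin 3) →L[ℝ] ℂ :=
  (EuclideanSpace.proj 0).restrictScalars ℝ

noncomputable def lastTwoCoords : EuclideanSpace ℂ (Fin 3) →L[ℝ] EuclideanSpace ℂ (Fin 2) :=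
  ((EuclideanSpace.equiv (Fin 2) ℂ).symm.toContinuousLinearMap.comp
    (ContinuousLinearMap.pi ![EuclideanSpace.proj 1, EuclideanSpace.proj 2])).restrictScalars ℝ

theorem norm_lastTwoCoords (w : EuclideanSpace ℂ (Fin 3)) :
    ‖lastTwoCoords w‖ = √(‖w 1‖ ^ 2 + ‖w 2‖ ^ 2) := by
  rw [EuclideanSpace.norm_eq, Fin.sum_univ_two]
  rfl

theorem norm_lastTwoCoords_le (w : EuclideanSpace ℂ (Fin 3)) : ‖lastTwoCoords w‖ ≤ ‖w‖ := by
  rw [norm_lastTwoCoords, EuclideanSpace.norm_eq, Fin.sum_univ_three]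
  gcongr
  exact le_add_of_nonneg_left (sq_nonneg _)

theorem phiOne_eq_comp_div (φ : ℝ → ℝ) :
    phiOne φ = fun w => φ (‖lastTwoCoords w‖ / ‖firstCoord w‖) := by
  ext w
  rw [norm_lastTwoCoords]
  rfl

theorem stmt_2_general (φ : ℝ → ℝ) (hφ : ContDiff ℝ 1 φ)
    (hφ0 : ∀ s, 0 ≤ φ s)
    (hφ'lo : ∀ s, -4 ≤ deriv φ s) (hφ'hi : ∀ s, deriv φ s ≤ 0)
    (hφlow : ∀ s : ℝ, s ≤ 1 / 6 → φ s = 1)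
    (hφhigh : ∀ s : ℝ, 1 / 2 ≤ s → φ s = 0)
    (x y z : ℂ) (hx : x ≠ 0) :
    DifferentiableAt ℝ (phiOne φ) ((WithLp.equiv 2 (Fin 3 → ℂ)).symm ![x, y, z]) ∧
    ‖fderiv ℝ (phiOne φ) ((WithLp.equiv 2 (Fin 3 → ℂ)).symm ![x, y, z])‖
      < 6 / ‖x‖ := by
  set p : EuclideanSpace ℂ (Fin 3) := (WithLp.equiv 2 (Fin 3 → ℂ)).symm ![x, y, z]
  have ha : 0 < ‖firstCoord p‖ := norm_pos_iff.2 hx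
  change _ ∧ _ < 6 / ‖firstCoord p‖
  rw [phiOne_eq_comp_div]
  rcases (norm_nonneg (lastTwoCoords p)).eq_or_lt with hr0 | hr
  · have hconst := comp_div_eventuallyEq_of_eq_zero hφlow (by norm_num)
      lastTwoCoords.continuous.norm.continuousAt firstCoord.continuous.norm.continuousAt
      ha.ne' hr0.symm
    refine ⟨(differentiableAt_const _).congr_of_eventuallyEq hconst, ?_⟩
    rw [hconst.fderiv_eq, fderiv_const_apply, norm_zero]
    positivity
  · have hr' := lastTwoCoords.differentiableAt.norm ℂ (norm_pos_iff.1 hr)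
    have ha' := firstCoord.differentiableAt.norm ℂ (norm_pos_iff.1 ha)
    have hφt := hφ.differentiable one_ne_zero (‖lastTwoCoords p‖ / ‖firstCoord p‖)
    have hdiv := (hr'.hasFDerivAt.fun_div_real ha'.hasFDerivAt ha.ne').differentiableAt
    refine ⟨hφt.comp p hdiv, ?_⟩
    calc _ ≤ _ := norm_fderiv_comp_div_le hφt hr' ha' ha hr.le
          (norm_fderiv_norm_comp_le_one _ norm_lastTwoCoords_le p)
          (norm_fderiv_norm_comp_le_one _ (fun w => PiLp.norm_apply_le w 0) p)
      _ < 6 / ‖firstCoord p‖ := by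
        gcongr
        exact abs_deriv_mul_one_add_lt hφ0 hφ'lo hφ'hi hφhigh (by positivity)

/-- If `φ : ℝ → ℝ` is `C¹` with `0 ≤ φ ≤ 1`, `−4 ≤ φ' ≤ 0`,
`φ ≡ 1` on `s ≤ 1/6` and `φ ≡ 0` on `s ≥ 1/2`, then
`φ₁(x,y,z) = φ(√(|y|²+|z|²)/|x|)` is differentiable (over `ℝ`) at every point with
`x ≠ 0` and the operator norm of its real Fréchet derivative there is `< 6/|x|`
(equivalently, the holomorphic and antiholomorphic gradients have norm `< 3/|x|`). -/
theorem stmt_2 (φ : ℝ → ℝ) (hφ : ContDiff ℝ 1 φ)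
    (hφ0 : ∀ s, 0 ≤ φ s) (hφ1 : ∀ s, φ s ≤ 1)
    (hφ'lo : ∀ s, -4 ≤ deriv φ s) (hφ'hi : ∀ s, deriv φ s ≤ 0)
    (hφlow : ∀ s : ℝ, s ≤ 1 / 6 → φ s = 1)
    (hφhigh : ∀ s : ℝ, 1 / 2 ≤ s → φ s = 0)
    (x y z : ℂ) (hx : x ≠ 0) :
    DifferentiableAt ℝ (phiOne φ) ((WithLp.equiv 2 (Fin 3 → ℂ)).symm ![x, y, z]) ∧
    ‖fderiv ℝ (phiOne φ) ((WithLp.equiv 2 (Fin 3 → ℂ)).symm ![x, y, z])‖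
      < 6 / ‖x‖ :=
  stmt_2_general φ hφ hφ0 hφ'lo hφ'hi hφlow hφhigh x y z hx
end

section
/- Let p, q, r ≥ 2 be integers with 1/p + 1/q + 1/r ≤ 1 (so that M = max{p,q,r} ≥ 3), and let a > 0. Let x, y, z ∈ ℂ satisfy |x| ≤ 1, |x|/6 < √(|y|² + |z|²) < |x|/2, and a·|x| > 30M. Let t, c ∈ [0,1], and let w, w' ∈ ℂ³ with ‖w‖ < 3/|x| and ‖w'‖ ≤ ‖w‖. Set u = a·(y·z, z·x, x·y) + ((1−t+t·c)·p·x^{p−1}, (1−t)·q·y^{q−1}, (1−t)·r·z^{r−1}) + t·x^p·w and v = t·x^p·w' in ℂ³. Then ‖u‖ − ‖v‖ > 3(M−2)·|x| > 0. -/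
/-!
The holomorphic part `u` is dominated by `a • (yz, zx, xy)`, whose norm is at least
`a |x| √(|y|² + |z|²) > 30M · |x|/6 = 5M|x|`. The remaining terms of `u` are small: the
monomial derivatives contribute at most `M|x| + M|x|/2 + M|x|/2 = 2M|x|` because
`|y|, |z| < |x|/2 ≤ 1`, and `t x^p w`, `t x^p w'` have norm at most `|x|^p · 3/|x| ≤ 3|x|`.
The triangle inequality leaves `5M|x| - 2M|x| - 6|x| = 3(M - 2)|x|`, which is positive since
`1/p + 1/q + 1/r ≤ 1` rules out `p = q = r = 2`.
-/

/-- The vector `(u,v,w)` in `ℂ³` with the Euclidean norm. -/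
noncomputable def vec3 (u v w : ℂ) : EuclideanSpace ℂ (Fin 3) :=
  (WithLp.equiv 2 (Fin 3 → ℂ)).symm ![u, v, w]

theorem three_le_max_of_one_div_add_le_one {p q r : ℕ} (hp : 2 ≤ p) (hq : 2 ≤ q) (hr : 2 ≤ r)
    (hpqr : (1 : ℝ) / p + 1 / q + 1 / r ≤ 1) : 3 ≤ max p (max q r) := by
  by_contra! h
  obtain ⟨rfl, rfl, rfl⟩ : p = 2 ∧ q = 2 ∧ r = 2 := by omega
  norm_num at hpqr

theorem norm_vec3 (u v w : ℂ) : ‖vec3 u v w‖ = √(‖u‖ ^ 2 + ‖v‖ ^ 2 + ‖w‖ ^ 2) := by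
  simp [vec3, EuclideanSpace.norm_eq, Fin.sum_univ_three]

theorem norm_vec3_le (u v w : ℂ) : ‖vec3 u v w‖ ≤ ‖u‖ + ‖v‖ + ‖w‖ := by
  rw [norm_vec3, Real.sqrt_le_left (by positivity)]
  nlinarith [norm_nonneg u, norm_nonneg v, norm_nonneg w]

theorem sqrt_le_norm_vec3 (u v w : ℂ) : √(‖v‖ ^ 2 + ‖w‖ ^ 2) ≤ ‖vec3 u v w‖ := by
  rw [norm_vec3, add_assoc]
  exact Real.sqrt_le_sqrt (le_add_of_nonneg_left (sq_nonneg _))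

theorem mul_norm_mul_sqrt_le_norm_smul_vec3 (a : ℝ) (x y z : ℂ) :
    a * ‖x‖ * √(‖y‖ ^ 2 + ‖z‖ ^ 2) ≤ ‖(a : ℂ) • vec3 (y * z) (z * x) (x * y)‖ := by
  have hsqrt : √(‖z * x‖ ^ 2 + ‖x * y‖ ^ 2) = ‖x‖ * √(‖y‖ ^ 2 + ‖z‖ ^ 2) := by
    rw [norm_mul, norm_mul, show (‖z‖ * ‖x‖) ^ 2 + (‖x‖ * ‖y‖) ^ 2
        = ‖x‖ ^ 2 * (‖y‖ ^ 2 + ‖z‖ ^ 2) by ring,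
      Real.sqrt_mul (sq_nonneg _), Real.sqrt_sq (norm_nonneg _)]
  rw [norm_smul, Complex.norm_real]
  calc a * ‖x‖ * √(‖y‖ ^ 2 + ‖z‖ ^ 2) = a * (‖x‖ * √(‖y‖ ^ 2 + ‖z‖ ^ 2)) := mul_assoc _ _ _
    _ ≤ ‖a‖ * (‖x‖ * √(‖y‖ ^ 2 + ‖z‖ ^ 2)) := by gcongr; exact Real.le_norm_self a
    _ ≤ ‖a‖ * ‖vec3 (y * z) (z * x) (x * y)‖ := by
        rw [← hsqrt]; gcongr; exact sqrt_le_norm_vec3 _ _ _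

theorem norm_mul_natCast_mul_pow_pred_le {s : ℝ} (hs : |s| ≤ 1) {n : ℕ} (hn : 2 ≤ n) {x : ℂ}
    (hx : ‖x‖ ≤ 1) : ‖(s : ℂ) * (n : ℂ) * x ^ (n - 1)‖ ≤ n * ‖x‖ := by
  rw [norm_mul, norm_mul, norm_pow, Complex.norm_real, Real.norm_eq_abs, Complex.norm_natCast]
  calc |s| * n * ‖x‖ ^ (n - 1) ≤ 1 * n * ‖x‖ := by
        gcongr; exact pow_le_of_le_one (norm_nonneg x) hx (by omega)
    _ = n * ‖x‖ := by ring

theorem norm_vec3_mul_natCast_mul_pow_pred_le {p q r : ℕ} (hp : 2 ≤ p) (hq : 2 ≤ q) (hr : 2 ≤ r)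
    {s₁ s₂ s₃ : ℝ} (hs₁ : |s₁| ≤ 1) (hs₂ : |s₂| ≤ 1) (hs₃ : |s₃| ≤ 1) {x y z : ℂ}
    (hx : ‖x‖ ≤ 1) (hy : ‖y‖ ≤ ‖x‖ / 2) (hz : ‖z‖ ≤ ‖x‖ / 2) :
    ‖vec3 ((s₁ : ℂ) * p * x ^ (p - 1)) ((s₂ : ℂ) * q * y ^ (q - 1)) ((s₃ : ℂ) * r * z ^ (r - 1))‖
      ≤ 2 * (max p (max q r) : ℕ) * ‖x‖ := by
  calc _ ≤ p * ‖x‖ + q * ‖y‖ + r * ‖z‖ := (norm_vec3_le _ _ _).trans <| add_le_add_three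
        (norm_mul_natCast_mul_pow_pred_le hs₁ hp hx)
        (norm_mul_natCast_mul_pow_pred_le hs₂ hq (by linarith))
        (norm_mul_natCast_mul_pow_pred_le hs₃ hr (by linarith))
    _ ≤ (max p (max q r) : ℕ) * ‖x‖ + (max p (max q r) : ℕ) * (‖x‖ / 2)
          + (max p (max q r) : ℕ) * (‖x‖ / 2) := by
        gcongr
        · exact le_max_left _ _
        · exact (le_max_left _ _).trans (le_max_right _ _)
        · exact (le_max_right _ _).trans (le_max_right _ _)
    _ = 2 * (max p (max q r) : ℕ) * ‖x‖ := by ring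

theorem norm_smul_pow_le {E : Type*} [SeminormedAddCommGroup E] [NormedSpace ℂ E]
    {s : ℂ} (hs : ‖s‖ ≤ 1) {p : ℕ} (hp : 2 ≤ p) {x : ℂ} (hx : ‖x‖ ≤ 1) {w : E} {K : ℝ}
    (hxw : ‖x‖ * ‖w‖ ≤ K) : ‖(s * x ^ p) • w‖ ≤ K * ‖x‖ := by
  obtain ⟨k, rfl⟩ : ∃ k, p = k + 2 := ⟨p - 2, by omega⟩
  rw [norm_smul, norm_mul, norm_pow]
  calc ‖s‖ * ‖x‖ ^ (k + 2) * ‖w‖ = ‖s‖ * ‖x‖ ^ k * ‖x‖ * (‖x‖ * ‖w‖) := by ring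
    _ ≤ 1 * 1 * ‖x‖ * K := by
        gcongr
        exact pow_le_one₀ (norm_nonneg x) hx
    _ = K * ‖x‖ := by ring

theorem sub_sub_sub_lt_norm_add_add_sub_norm {E : Type*} [SeminormedAddCommGroup E]
    {A B C V : E} {α β γ δ : ℝ} (hA : α < ‖A‖) (hB : ‖B‖ ≤ β) (hC : ‖C‖ ≤ γ) (hV : ‖V‖ ≤ δ) :
    α - β - γ - δ < ‖A + B + C‖ - ‖V‖ := by
  have hABC := norm_le_add_norm_add A (B + C)
  rw [← add_assoc] at hABC
  linarith [norm_add_le B C]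

theorem stmt_3_general (p q r : ℕ) (hp : 2 ≤ p) (hq : 2 ≤ q) (hr : 2 ≤ r)
    (hpqr : (1 : ℝ) / p + 1 / q + 1 / r ≤ 1)
    (a : ℝ)
    (x y z : ℂ) (hx1 : ‖x‖ ≤ 1)
    (hlow : ‖x‖ / 6 < Real.sqrt (‖y‖ ^ 2 + ‖z‖ ^ 2))
    (hhigh : Real.sqrt (‖y‖ ^ 2 + ‖z‖ ^ 2) < ‖x‖ / 2)
    (hax : 30 * ((max p (max q r) : ℕ) : ℝ) < a * ‖x‖)
    (t c : ℝ) (ht : t ∈ Set.Icc (0 : ℝ) 1) (hc : c ∈ Set.Icc (0 : ℝ) 1)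
    (w w' : EuclideanSpace ℂ (Fin 3))
    (hw : ‖w‖ < 3 / ‖x‖) (hw' : ‖w'‖ ≤ ‖w‖) :
    ‖(a : ℂ) • vec3 (y * z) (z * x) (x * y)
        + vec3 (((1 - t + t * c : ℝ) : ℂ) * (p : ℂ) * x ^ (p - 1))
               (((1 - t : ℝ) : ℂ) * (q : ℂ) * y ^ (q - 1))
               (((1 - t : ℝ) : ℂ) * (r : ℂ) * z ^ (r - 1))
        + ((t : ℂ) * x ^ p) • w‖
      - ‖((t : ℂ) * x ^ p) • w'‖
      > 3 * (((max p (max q r) : ℕ) : ℝ) - 2) * ‖x‖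
    ∧ 0 < 3 * (((max p (max q r) : ℕ) : ℝ) - 2) * ‖x‖ := by
  obtain ⟨ht0, ht1⟩ := ht
  obtain ⟨hc0, hc1⟩ := hc
  have hM3 : (3 : ℝ) ≤ (max p (max q r) : ℕ) := by
    exact_mod_cast three_le_max_of_one_div_add_le_one hp hq hr hpqr
  set M : ℝ := ((max p (max q r) : ℕ) : ℝ)
  have hx : 0 < ‖x‖ := (norm_nonneg x).lt_of_ne fun h ↦ by rw [← h, mul_zero] at hax; linarith
  have hy : ‖y‖ ≤ ‖x‖ / 2 :=
    (Real.le_sqrt_of_sq_le (le_add_of_nonneg_right (sq_nonneg _))).trans hhigh.le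
  have hz : ‖z‖ ≤ ‖x‖ / 2 :=
    (Real.le_sqrt_of_sq_le (le_add_of_nonneg_left (sq_nonneg _))).trans hhigh.le
  have hA := (show 5 * M * ‖x‖ < a * ‖x‖ * √(‖y‖ ^ 2 + ‖z‖ ^ 2) by
    linarith [mul_lt_mul'' hax hlow (by positivity) (by positivity)]).trans_le
    (mul_norm_mul_sqrt_le_norm_smul_vec3 a x y z)
  have hB := norm_vec3_mul_natCast_mul_pow_pred_le hp hq hr
    (abs_le.mpr ⟨by nlinarith, by nlinarith⟩ : |1 - t + t * c| ≤ 1)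
    (abs_le.mpr ⟨by linarith, by linarith⟩ : |1 - t| ≤ 1)
    (abs_le.mpr ⟨by linarith, by linarith⟩ : |1 - t| ≤ 1) hx1 hy hz
  have hxw : ‖x‖ * ‖w‖ ≤ 3 := ((lt_div_iff₀' hx).mp hw).le
  have ht_norm : ‖(t : ℂ)‖ ≤ 1 := by rwa [Complex.norm_real, Real.norm_of_nonneg ht0]
  have hC := norm_smul_pow_le ht_norm hp hx1 hxw
  have hV := norm_smul_pow_le ht_norm hp hx1 ((mul_le_mul_of_nonneg_left hw' hx.le).trans hxw)
  refine ⟨lt_of_eq_of_lt (by ring) (sub_sub_sub_lt_norm_add_add_sub_norm hA hB hC hV), ?_⟩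
  nlinarith

/-- The key gradient estimate for the deformed defining functions
`f_t`: with `u` the model for the holomorphic gradient `∇f_t` and `v = t·x^p·w'`
the model for the antiholomorphic gradient, one has
`‖u‖ − ‖v‖ > 3(M−2)|x| > 0`. -/
theorem stmt_3 (p q r : ℕ) (hp : 2 ≤ p) (hq : 2 ≤ q) (hr : 2 ≤ r)
    (hpqr : (1 : ℝ) / p + 1 / q + 1 / r ≤ 1)
    (a : ℝ) (ha : 0 < a)
    (x y z : ℂ) (hx1 : ‖x‖ ≤ 1)
    (hlow : ‖x‖ / 6 < Real.sqrt (‖y‖ ^ 2 + ‖z‖ ^ 2))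
    (hhigh : Real.sqrt (‖y‖ ^ 2 + ‖z‖ ^ 2) < ‖x‖ / 2)
    (hax : 30 * ((max p (max q r) : ℕ) : ℝ) < a * ‖x‖)
    (t c : ℝ) (ht : t ∈ Set.Icc (0 : ℝ) 1) (hc : c ∈ Set.Icc (0 : ℝ) 1)
    (w w' : EuclideanSpace ℂ (Fin 3))
    (hw : ‖w‖ < 3 / ‖x‖) (hw' : ‖w'‖ ≤ ‖w‖) :
    ‖(a : ℂ) • vec3 (y * z) (z * x) (x * y)
        + vec3 (((1 - t + t * c : ℝ) : ℂ) * (p : ℂ) * x ^ (p - 1))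
               (((1 - t : ℝ) : ℂ) * (q : ℂ) * y ^ (q - 1))
               (((1 - t : ℝ) : ℂ) * (r : ℂ) * z ^ (r - 1))
        + ((t : ℂ) * x ^ p) • w‖
      - ‖((t : ℂ) * x ^ p) • w'‖
      > 3 * (((max p (max q r) : ℕ) : ℝ) - 2) * ‖x‖
    ∧ 0 < 3 * (((max p (max q r) : ℕ) : ℝ) - 2) * ‖x‖ :=
  stmt_3_general p q r hp hq hr hpqr a x y z hx1 hlow hhigh hax t c ht hc w w' hw hw'
end

section
/- Let p, q, r be integers with 2 ≤ p ≤ q ≤ r and qr + rp + pq < pqr (equivalently 1/p + 1/q + 1/r < 1). Then |qr + rp + pq − pqr| = 1 if and only if (p,q,r) = (2,3,7). Equivalently, among the hyperbolic triples, the lattice T(p,q,r) is unimodular exactly for (p,q,r) = (2,3,7). -/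
/-- For integers `2 ≤ p ≤ q ≤ r` with `qr + rp + pq < pqr`
(i.e. `1/p + 1/q + 1/r < 1`), the discriminant `qr + rp + pq − pqr` of the lattice
`T(p,q,r)` has absolute value `1` if and only if `(p,q,r) = (2,3,7)`. -/
theorem stmt_8 (p q r : ℕ) (hp : 2 ≤ p) (hpq : p ≤ q) (hqr : q ≤ r)
    (hhyp : q * r + r * p + p * q < p * q * r) :
    |(q : ℤ) * r + (r : ℤ) * p + (p : ℤ) * q - (p : ℤ) * q * r| = 1 ↔
      p = 2 ∧ q = 3 ∧ r = 7 := by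
  have hz : ((q * r + r * p + p * q : ℕ) : ℤ) < ((p * q * r : ℕ) : ℤ) := by
    exact_mod_cast hhyp
  push_cast at hz
  constructor
  · intro h
    rw [abs_of_neg (by linarith)] at h
    have hnat : p * q * r = q * r + r * p + p * q + 1 := by
      have : ((p * q * r : ℕ) : ℤ) = ((q * r + r * p + p * q + 1 : ℕ) : ℤ) := by
        push_cast; linarith
      exact_mod_cast this
    have hq2 : 2 ≤ q := le_trans hp hpq
    have hr2 : 2 ≤ r := le_trans hq2 hqr
    have h1 : p * q ≤ q * r := Nat.mul_le_mul hpq hqr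
    have h2 : r * p ≤ q * r := by rw [mul_comm]; exact Nat.mul_le_mul hpq le_rfl
    have h3 : 4 ≤ q * r := Nat.mul_le_mul hq2 hr2
    have hp3 : p ≤ 3 := by
      by_contra hc
      push_neg at hc
      have h4 : 4 * (q * r) ≤ p * q * r := by
        rw [mul_assoc]
        exact Nat.mul_le_mul (by omega) le_rfl
      linarith
    interval_cases p
    · -- p = 2
      have hq4 : q ≤ 4 := by
        by_contra hc
        push_neg at hc
        have h5 : 5 * r ≤ q * r := Nat.mul_le_mul hc le_rfl
        linarith
      interval_cases q <;> omega
    · -- p = 3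
      have hq3 : q ≤ 3 := by
        by_contra hc
        push_neg at hc
        have h5 : 4 * r ≤ q * r := Nat.mul_le_mul hc le_rfl
        linarith
      interval_cases q <;> omega
  · rintro ⟨rfl, rfl, rfl⟩
    norm_num
end

section
/- There exists a 10×10 integer matrix U with det U = ±1 (i.e., U invertible over ℤ) such that Uᵀ · C(2,3,7) · U equals the block-diagonal matrix with blocks the 8×8 Cartan matrix of E₈ and the 2×2 hyperbolic matrix H = [[0,1],[1,0]]. In other words, the lattice E₁₀ = T(2,3,7) is isomorphic to E₈ ⊕ H. -/
/-- The Cartan matrix of the diagram `T(2,3,7)` (the lattice `E₁₀`): the central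
vertex `0` carries three chains `1`, `2–3` and `4–5–6–7–8–9`, of lengths `1`, `2`
and `6`; diagonal entries are `2` and adjacent vertices give `−1`. -/
def CartanT237 : Matrix (Fin 10) (Fin 10) ℤ :=
  !![ 2, -1, -1,  0, -1,  0,  0,  0,  0,  0;
     -1,  2,  0,  0,  0,  0,  0,  0,  0,  0;
     -1,  0,  2, -1,  0,  0,  0,  0,  0,  0;
      0,  0, -1,  2,  0,  0,  0,  0,  0,  0;
     -1,  0,  0,  0,  2, -1,  0,  0,  0,  0;
      0,  0,  0,  0, -1,  2, -1,  0,  0,  0;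
      0,  0,  0,  0,  0, -1,  2, -1,  0,  0;
      0,  0,  0,  0,  0,  0, -1,  2, -1,  0;
      0,  0,  0,  0,  0,  0,  0, -1,  2, -1;
      0,  0,  0,  0,  0,  0,  0,  0, -1,  2]

/-- The change-of-basis matrix. -/
def U10 : Matrix (Fin 10) (Fin 10) ℤ :=
  !![0, 0, 0, 1, 0, 0, 0, 0, 6, -6;
     0, 1, 0, 0, 0, 0, 0, 0, 3, -3;
     0, 0, 1, 0, 0, 0, 0, 0, 4, -4;
     1, 0, 0, 0, 0, 0, 0, 0, 2, -2;
     0, 0, 0, 0, 1, 0, 0, 0, 5, -5;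
     0, 0, 0, 0, 0, 1, 0, 0, 4, -4;
     0, 0, 0, 0, 0, 0, 1, 0, 3, -3;
     0, 0, 0, 0, 0, 0, 0, 1, 2, -2;
     0, 0, 0, 0, 0, 0, 0, 0, 1, -1;
     0, 0, 0, 0, 0, 0, 0, 0, 1, 0]

/-- The inverse of `U10`. -/
def V10 : Matrix (Fin 10) (Fin 10) ℤ :=
  !![0, 0, 0, 1, 0, 0, 0, 0, -2, 0;
     0, 1, 0, 0, 0, 0, 0, 0, -3, 0;
     0, 0, 1, 0, 0, 0, 0, 0, -4, 0;
     1, 0, 0, 0, 0, 0, 0, 0, -6, 0;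
     0, 0, 0, 0, 1, 0, 0, 0, -5, 0;
     0, 0, 0, 0, 0, 1, 0, 0, -4, 0;
     0, 0, 0, 0, 0, 0, 1, 0, -3, 0;
     0, 0, 0, 0, 0, 0, 0, 1, -2, 0;
     0, 0, 0, 0, 0, 0, 0, 0, 0, 1;
     0, 0, 0, 0, 0, 0, 0, 0, -1, 1]

lemma U10_mul_V10 : U10 * V10 = 1 := by decide

lemma V10_mul_U10 : V10 * U10 = 1 := by decide

lemma U10_det_isUnit : IsUnit U10.det := by
  rw [← Matrix.isUnit_iff_isUnit_det U10]
  exact ⟨⟨U10, V10, U10_mul_V10, V10_mul_U10⟩, rfl⟩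

open Matrix in
/-- There is a matrix `U ∈ GL(10,ℤ)` with
`Uᵀ · C(2,3,7) · U = E₈ ⊕ H`, i.e. the lattice `E₁₀ = T(2,3,7)` is isomorphic to
the orthogonal direct sum of `E₈` and the hyperbolic plane `H = [[0,1],[1,0]]`. -/
theorem stmt_10 :
    ∃ U : Matrix (Fin 10) (Fin 10) ℤ,
      (U.det = 1 ∨ U.det = -1) ∧
      Uᵀ * CartanT237 * U
        = Matrix.reindex finSumFinEquiv finSumFinEquiv
            (Matrix.fromBlocks CartanMatrix.E₈ 0 0 !![0, 1; 1, 0]) := by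
  refine ⟨U10, Int.isUnit_iff.mp U10_det_isUnit, ?_⟩
  decide
end

section
/- For integers p, q, r ≥ 2 define A_{p,q,r} = [[r−1,−1],[1,0]] · [[q−1,−1],[1,0]] · [[p−1,−1],[1,0]], an element of SL(2,ℤ). For each of the ten extended strange duality pairs of triples — ((2,3,7),(2,3,7)), ((2,4,5),(2,3,8)), ((3,3,4),(2,3,9)), ((2,4,6),(2,4,6)), ((3,3,5),(2,4,7)), ((3,3,6),(3,3,6)), ((2,5,5),(2,5,5)), ((3,4,4),(2,5,6)), ((3,4,5),(3,4,5)), ((4,4,4),(4,4,4)) — there exists P ∈ SL(2,ℤ) such that P · A_{p,q,r} · P⁻¹ = (A_{p',q',r'})⁻¹. In particular, for each of the six self-dual triples, A_{p,q,r} is conjugate in SL(2,ℤ) to its own inverse. -/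
/-- The elementary factor `[[n−1,−1],[1,0]]` as an element of `SL(2,ℤ)`. -/
def genMat (n : ℕ) : Matrix.SpecialLinearGroup (Fin 2) ℤ :=
  ⟨!![(n : ℤ) - 1, -1; 1, 0], by simp [Matrix.det_fin_two_of]⟩

/-- The monodromy matrix `A_{p,q,r}` of the torus-bundle link of the cusp
singularity `T_{p,q,r}`. -/
def cuspMonodromy (p q r : ℕ) : Matrix.SpecialLinearGroup (Fin 2) ℤ :=
  genMat r * genMat q * genMat p

/-- `A` is conjugate in `SL(2,ℤ)` to the inverse of `B`. -/
def ConjInv (A B : Matrix.SpecialLinearGroup (Fin 2) ℤ) : Prop :=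
  ∃ P : Matrix.SpecialLinearGroup (Fin 2) ℤ, P * A * P⁻¹ = B⁻¹

lemma conjInv_of (A B P : Matrix.SpecialLinearGroup (Fin 2) ℤ)
    (h : B * P * A = P) : ConjInv A B := by
  refine ⟨P, ?_⟩
  have h2 : P * A = B⁻¹ * P := by
    have := congrArg (fun X => B⁻¹ * X) h
    simpa [← mul_assoc] using this
  rw [h2, mul_assoc, mul_inv_cancel, mul_one]

/-- For each of the ten extended strange duality pairs of
triples, the monodromy `A_{p,q,r}` is conjugate in `SL(2,ℤ)` to the inverse of
the monodromy `A_{p',q',r'}` of the dual triple. -/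
theorem stmt_11 :
    ConjInv (cuspMonodromy 2 3 7) (cuspMonodromy 2 3 7) ∧
    ConjInv (cuspMonodromy 2 4 5) (cuspMonodromy 2 3 8) ∧
    ConjInv (cuspMonodromy 3 3 4) (cuspMonodromy 2 3 9) ∧
    ConjInv (cuspMonodromy 2 4 6) (cuspMonodromy 2 4 6) ∧
    ConjInv (cuspMonodromy 3 3 5) (cuspMonodromy 2 4 7) ∧
    ConjInv (cuspMonodromy 3 3 6) (cuspMonodromy 3 3 6) ∧
    ConjInv (cuspMonodromy 2 5 5) (cuspMonodromy 2 5 5) ∧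
    ConjInv (cuspMonodromy 3 4 4) (cuspMonodromy 2 5 6) ∧
    ConjInv (cuspMonodromy 3 4 5) (cuspMonodromy 3 4 5) ∧
    ConjInv (cuspMonodromy 4 4 4) (cuspMonodromy 4 4 4) :=
  ⟨conjInv_of _ _ ⟨!![-5,13;-2,5], by decide⟩ (by ext i j; fin_cases i <;> fin_cases j <;> decide),
   conjInv_of _ _ ⟨!![-3,7;-1,2], by decide⟩ (by ext i j; fin_cases i <;> fin_cases j <;> decide),
   conjInv_of _ _ ⟨!![-3,4;-1,1], by decide⟩ (by ext i j; fin_cases i <;> fin_cases j <;> decide),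
   conjInv_of _ _ ⟨!![-2,5;-1,2], by decide⟩ (by ext i j; fin_cases i <;> fin_cases j <;> decide),
   conjInv_of _ _ ⟨!![-2,3;-1,1], by decide⟩ (by ext i j; fin_cases i <;> fin_cases j <;> decide),
   conjInv_of _ _ ⟨!![-1,2;-1,1], by decide⟩ (by ext i j; fin_cases i <;> fin_cases j <;> decide),
   conjInv_of _ _ ⟨!![-3,5;-2,3], by decide⟩ (by ext i j; fin_cases i <;> fin_cases j <;> decide),
   conjInv_of _ _ ⟨!![-2,3;-1,1], by decide⟩ (by ext i j; fin_cases i <;> fin_cases j <;> decide),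
   conjInv_of _ _ ⟨!![-1,2;-1,1], by decide⟩ (by ext i j; fin_cases i <;> fin_cases j <;> decide),
   conjInv_of _ _ ⟨!![-2,1;-5,2], by decide⟩ (by ext i j; fin_cases i <;> fin_cases j <;> decide)⟩
end
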